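/- arXiv:quant-ph/9802049 — 7 statements merged into one kernel-verified Lean document; each statement's English description precedes it below -/
import Mathlib

section
/- For every multilinear polynomial p in N real variables, there exists a single-variate real polynomial q of degree at most deg(p) such that for every Boolean input X ∈ {0,1}^N, the symmetrization p^sym(X) = (1/N!) Σ_{π ∈ S_N} p(π(X)) equals q(|X|), where |X| is the Hamming weight of X. -/
/-- Boolean to real conversion. -/
noncomputable def bR (b : Bool) : ℝ := if b then 1 else 0

/-- Hamming weight of a Boolean vector. -/
def hamming {N : ℕ} (X : Fin N → Bool) : ℕ :=
  (Finset.univ.filter (fun i => X i = true)).card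

open Finset

/-- The number of permutations whose restriction to `S` is a given injective map `f`. -/
lemma card_perm_restrict {α : Type*} [Fintype α] [DecidableEq α] (S : Finset α)
    (f : ↥S → α) (hf : Function.Injective f) :
    (Finset.univ.filter (fun π : Equiv.Perm α => ∀ i : ↥S, π i = f i)).card
      = (Fintype.card α - S.card).factorial := by
  classical
  set R : Finset α := Finset.univ.image (fun i : ↥S => f i) with hR
  have hmemR : ∀ i : ↥S, f i ∈ R := fun i => Finset.mem_image.2 ⟨i, Finset.mem_univ _, rfl⟩
  have hRcard : R.card = S.card := by
    rw [hR, Finset.card_image_of_injective _ hf, Finset.card_univ, Fintype.card_coe]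
  have hcardSR : Fintype.card ↥S = Fintype.card ↥R := by
    rw [Fintype.card_coe, Fintype.card_coe, hRcard]
  have hbij : Function.Bijective (fun i : ↥S => (⟨f i, hmemR i⟩ : ↥R)) := by
    rw [Fintype.bijective_iff_injective_and_card]
    exact ⟨fun i j h => hf (congrArg Subtype.val h), hcardSR⟩
  let e : ↥S ≃ ↥R := Equiv.ofBijective _ hbij
  have he : ∀ i : ↥S, (e i : α) = f i := fun i => rfl
  -- the gluing map
  let glue : ({a // ¬ a ∈ S} ≃ {a // ¬ a ∈ R}) → Equiv.Perm α := fun g =>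
    ((Equiv.sumCompl (· ∈ S)).symm.trans ((e.sumCongr g).trans (Equiv.sumCompl (· ∈ R))))
  have hglue_pos : ∀ g a (h : a ∈ S), glue g a = f ⟨a, h⟩ := by
    intro g a h
    simp only [glue, Equiv.trans_apply, Equiv.sumCompl_symm_apply_of_pos h,
      Equiv.sumCongr_apply, Sum.map_inl, Equiv.sumCompl_apply_inl]
    rfl
  have hglue_neg : ∀ g a (h : ¬ a ∈ S), glue g a = (g ⟨a, h⟩ : α) := by
    intro g a h
    simp only [glue, Equiv.trans_apply, Equiv.sumCompl_symm_apply_of_neg h,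
      Equiv.sumCongr_apply, Sum.map_inr, Equiv.sumCompl_apply_inr]
  have hglue_mem : ∀ g, glue g ∈
      Finset.univ.filter (fun π : Equiv.Perm α => ∀ i : ↥S, π i = f i) := by
    intro g
    refine Finset.mem_filter.2 ⟨Finset.mem_univ _, fun i => ?_⟩
    rw [hglue_pos g i i.2]
  let glue' : ({a // ¬ a ∈ S} ≃ {a // ¬ a ∈ R}) →
      {π : Equiv.Perm α // ∀ i : ↥S, π i = f i} := fun g =>
    ⟨glue g, fun i => by rw [hglue_pos g i i.2]⟩
  have hglue'_bij : Function.Bijective glue' := by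
    constructor
    · intro g₁ g₂ h
      ext a
      have := congrArg (fun π : {π : Equiv.Perm α // ∀ i : ↥S, π i = f i} =>
        (π : Equiv.Perm α) (a : α)) h
      rw [hglue_neg g₁ a a.2, hglue_neg g₂ a a.2] at this
      exact this
    · rintro ⟨π, hπ⟩
      have hmap : ∀ a : α, ¬ a ∈ S → ¬ π a ∈ R := by
        intro a ha hmem
        rw [hR, Finset.mem_image] at hmem
        obtain ⟨i, -, hi⟩ := hmem
        exact ha (by rw [← hπ i] at hi; have := π.injective hi; rw [← this]; exact i.2)
      have hg0 : Function.Bijective (fun a : {a // ¬ a ∈ S} =>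
          (⟨π a, hmap a a.2⟩ : {a // ¬ a ∈ R})) := by
        rw [Fintype.bijective_iff_injective_and_card]
        constructor
        · intro a b h
          exact Subtype.ext (π.injective (congrArg Subtype.val h))
        · rw [Fintype.card_subtype_compl, Fintype.card_subtype_compl, hcardSR]
      refine ⟨Equiv.ofBijective _ hg0, ?_⟩
      apply Subtype.ext
      ext a
      by_cases h : a ∈ S
      · rw [hglue_pos _ a h]; exact (hπ ⟨a, h⟩).symm
      · rw [hglue_neg _ a h]; rfl
  have hc1 : (Finset.univ.filter (fun π : Equiv.Perm α => ∀ i : ↥S, π i = f i)).card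
      = Fintype.card {π : Equiv.Perm α // ∀ i : ↥S, π i = f i} := by
    rw [Fintype.card_subtype]
  rw [hc1, ← Fintype.card_of_bijective hglue'_bij]
  have hcc : Fintype.card {a // ¬ a ∈ S} = Fintype.card α - S.card := by
    rw [Fintype.card_subtype_compl, Fintype.card_coe]
  have hcc' : Fintype.card {a // ¬ a ∈ R} = Fintype.card α - S.card := by
    rw [Fintype.card_subtype_compl, Fintype.card_coe, hRcard]
  rw [Fintype.card_equiv (Fintype.equivOfCardEq (by rw [hcc, hcc'])), hcc]

/-- The number of permutations mapping `S` into `T`. -/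
lemma card_perm_maps_into {α : Type*} [Fintype α] [DecidableEq α] (S T : Finset α) :
    (Finset.univ.filter (fun π : Equiv.Perm α => ∀ i ∈ S, π i ∈ T)).card
      = T.card.descFactorial S.card * (Fintype.card α - S.card).factorial := by
  classical
  set t : Finset (↥S → α) :=
    Finset.univ.filter (fun f : ↥S → α => Function.Injective f ∧ ∀ i, f i ∈ T) with ht
  have hmaps : ∀ π ∈ Finset.univ.filter (fun π : Equiv.Perm α => ∀ i ∈ S, π i ∈ T),
      (fun i : ↥S => π i) ∈ t := by
    intro π hπ
    rw [Finset.mem_filter] at hπ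
    refine Finset.mem_filter.2 ⟨Finset.mem_univ _, fun i j h => Subtype.ext (π.injective h),
      fun i => hπ.2 i i.2⟩
  rw [Finset.card_eq_sum_card_fiberwise hmaps]
  have hfib : ∀ f ∈ t,
      ((Finset.univ.filter (fun π : Equiv.Perm α => ∀ i ∈ S, π i ∈ T)).filter
        (fun π => (fun i : ↥S => π i) = f)).card
      = (Fintype.card α - S.card).factorial := by
    intro f hf
    rw [ht, Finset.mem_filter] at hf
    rw [← card_perm_restrict S f hf.2.1]
    congr 1
    ext π
    simp only [Finset.mem_filter, Finset.mem_univ, true_and]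
    constructor
    · rintro ⟨-, h⟩ i
      exact congrFun h i
    · intro h
      exact ⟨fun i hi => by rw [h ⟨i, hi⟩]; exact hf.2.2 ⟨i, hi⟩, funext h⟩
  rw [Finset.sum_congr rfl hfib, Finset.sum_const, smul_eq_mul]
  congr 1
  -- t.card = descFactorial
  have : t.card = Fintype.card (↥S ↪ ↥T) := by
    rw [← Fintype.card_coe t]
    apply Fintype.card_congr
    exact { toFun := fun f => ⟨fun i => ⟨f.1 i, ((Finset.mem_filter.1 f.2).2).2 i⟩,
              fun i j h => ((Finset.mem_filter.1 f.2).2).1 (congrArg Subtype.val h)⟩,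
            invFun := fun e => ⟨fun i => (e i : α), Finset.mem_filter.2 ⟨Finset.mem_univ _,
              fun i j h => e.injective (Subtype.ext h), fun i => (e i).2⟩⟩,
            left_inv := fun f => Subtype.ext rfl,
            right_inv := fun e => DFunLike.ext _ _ fun i => Subtype.ext rfl }
  rw [this, Fintype.card_embedding_eq, Fintype.card_coe, Fintype.card_coe]

/-- Symmetrized value of a squarefree monomial. -/
lemma monomial_perm_sum {N : ℕ} (S : Finset (Fin N)) (X : Fin N → Bool) :
    ∑ π : Equiv.Perm (Fin N), ∏ i ∈ S, bR (X (π i))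
      = ((hamming X).descFactorial S.card * (N - S.card).factorial : ℕ) := by
  classical
  have h1 : ∀ π : Equiv.Perm (Fin N), ∏ i ∈ S, bR (X (π i))
      = if ∀ i ∈ S, X (π i) = true then (1 : ℝ) else 0 := by
    intro π
    simp only [bR]
    rw [Finset.prod_boole]
    congr
  simp_rw [h1]
  rw [Finset.sum_boole]
  have h2 : (Finset.univ.filter (fun π : Equiv.Perm (Fin N) => ∀ i ∈ S, X (π i) = true)).card
      = (Finset.univ.filter (fun i => X i = true)).card.descFactorial S.card
        * (Fintype.card (Fin N) - S.card).factorial := by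
    rw [← card_perm_maps_into S (Finset.univ.filter (fun i => X i = true))]
    congr 1
    ext π
    simp
  rw [h2]
  simp [hamming]

/-- Minsky–Papert symmetrization lemma: for any multilinear polynomial `p` in `N`
real variables, there is a univariate polynomial `q` of degree at most `deg p`
such that the symmetrization of `p` at any Boolean input `X` equals `q(|X|)`. -/
theorem symmetrization_univariate (N : ℕ) (p : MvPolynomial (Fin N) ℝ)
    (hml : ∀ i : Fin N, p.degreeOf i ≤ 1) :
    ∃ q : Polynomial ℝ, q.natDegree ≤ p.totalDegree ∧
      ∀ X : Fin N → Bool,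
        (∑ π : Equiv.Perm (Fin N),
            MvPolynomial.eval (fun i => bR (X (π i))) p) / (N.factorial : ℝ)
          = q.eval ((hamming X : ℝ)) := by
  classical
  have hexp : ∀ m ∈ p.support, ∀ i ∈ m.support, m i = 1 := by
    intro m hm i hi
    have h1 : m i ≤ 1 := by
      refine le_trans ?_ (hml i)
      rw [MvPolynomial.degreeOf_eq_sup]
      exact Finset.le_sup (f := fun m => m i) hm
    have h2 : 1 ≤ m i := Nat.one_le_iff_ne_zero.2 (Finsupp.mem_support_iff.1 hi)
    omega
  have hcard_le : ∀ m ∈ p.support, m.support.card ≤ p.totalDegree := by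
    intro m hm
    refine le_trans ?_ (MvPolynomial.le_totalDegree hm)
    rw [Finsupp.sum, Finset.card_eq_sum_ones]
    exact Finset.sum_le_sum fun i hi => Nat.one_le_iff_ne_zero.2 (Finsupp.mem_support_iff.1 hi)
  refine ⟨∑ m ∈ p.support, Polynomial.C
      (p.coeff m * ((N - m.support.card).factorial : ℝ) / (N.factorial : ℝ))
      * descPochhammer ℝ m.support.card, ?_, ?_⟩
  · apply Polynomial.natDegree_sum_le_of_forall_le
    intro m hm
    refine le_trans (Polynomial.natDegree_C_mul_le _ _) ?_
    rw [descPochhammer_natDegree]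
    exact hcard_le m hm
  · intro X
    have hNfac : (N.factorial : ℝ) ≠ 0 := Nat.cast_ne_zero.2 (Nat.factorial_ne_zero N)
    have heval : ∀ π : Equiv.Perm (Fin N),
        MvPolynomial.eval (fun i => bR (X (π i))) p
        = ∑ m ∈ p.support, p.coeff m * ∏ i ∈ m.support, bR (X (π i)) := by
      intro π
      rw [MvPolynomial.eval_eq]
      apply Finset.sum_congr rfl
      intro m hm
      congr 1
      apply Finset.prod_congr rfl
      intro i hi
      rw [hexp m hm i hi, pow_one]
    simp_rw [heval]
    rw [Finset.sum_comm]
    rw [Polynomial.eval_finset_sum]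
    rw [Finset.sum_div]
    apply Finset.sum_congr rfl
    intro m hm
    rw [← Finset.mul_sum, monomial_perm_sum m.support X]
    rw [Polynomial.eval_mul, Polynomial.eval_C, descPochhammer_eval_eq_descFactorial]
    push_cast
    field_simp
end

section
/- Any real polynomial that approximates the PARITY function on {0,1}^N (pointwise to within 1/3 on all Boolean inputs) has degree at least N. Hence the approximate degree of PARITY equals N. -/
/-- PARITY of a Boolean vector, as a real number. -/
noncomputable def parityR {N : ℕ} (X : Fin N → Bool) : ℝ :=
  if Odd (hamming X) then 1 else 0

noncomputable def sgnR {N : ℕ} (X : Fin N → Bool) : ℝ := (-1) ^ hamming X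

lemma sgnR_eq_prod {N : ℕ} (X : Fin N → Bool) :
    sgnR X = ∏ i, (if X i then (-1:ℝ) else 1) := by
  unfold sgnR hamming
  rw [Finset.card_filter, ← Finset.prod_pow_eq_pow_sum]
  refine Finset.prod_congr rfl fun i _ => ?_
  by_cases h : X i = true <;> simp [h]

lemma sum_prod_bool {N : ℕ} (g : Fin N → Bool → ℝ) :
    ∑ X : Fin N → Bool, ∏ i, g i (X i) = ∏ i, (g i true + g i false) := by
  have := Finset.prod_univ_sum (fun _ : Fin N => (Finset.univ : Finset Bool)) g
  rw [Fintype.piFinset_univ] at this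
  rw [← this]
  refine Finset.prod_congr rfl fun i _ => ?_
  simp [Fintype.sum_bool]

lemma parityR_eq {N : ℕ} (X : Fin N → Bool) : parityR X = (1 - sgnR X) / 2 := by
  unfold parityR sgnR
  by_cases h : Odd (hamming X)
  · rw [if_pos h, h.neg_one_pow]; norm_num
  · rw [if_neg h, (Nat.not_odd_iff_even.mp h).neg_one_pow]; norm_num

lemma sgnR_sq {N : ℕ} (X : Fin N → Bool) : sgnR X * sgnR X = 1 := by
  unfold sgnR
  rw [← pow_add]
  exact Even.neg_one_pow ⟨hamming X, rfl⟩

lemma sum_sgnR {N : ℕ} (hN : 0 < N) : ∑ X : Fin N → Bool, sgnR X = 0 := by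
  have : ∑ X : Fin N → Bool, ∏ i, (if X i then (-1:ℝ) else 1) = ∏ i : Fin N, ((-1:ℝ) + 1) := by
    have := sum_prod_bool (fun (_ : Fin N) (b : Bool) => if b then (-1:ℝ) else 1)
    simpa using this
  simp only [← sgnR_eq_prod] at this
  rw [this]
  exact Finset.prod_eq_zero (Finset.mem_univ ⟨0, hN⟩) (by norm_num)

lemma sum_sgnR_monomial {N : ℕ} (d : Fin N →₀ ℕ) (i0 : Fin N) (h0 : d i0 = 0) :
    ∑ X : Fin N → Bool, sgnR X * ∏ i, bR (X i) ^ d i = 0 := by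
  have key : ∑ X : Fin N → Bool, ∏ i, ((if X i then (-1:ℝ) else 1) * bR (X i) ^ d i)
      = ∏ i : Fin N, ((if true then (-1:ℝ) else 1) * bR true ^ d i
          + (if false then (-1:ℝ) else 1) * bR false ^ d i) :=
    sum_prod_bool (fun (i : Fin N) (b : Bool) => (if b then (-1:ℝ) else 1) * bR b ^ d i)
  have lhs : ∀ X : Fin N → Bool,
      sgnR X * ∏ i, bR (X i) ^ d i = ∏ i, ((if X i then (-1:ℝ) else 1) * bR (X i) ^ d i) := by
    intro X
    rw [sgnR_eq_prod, ← Finset.prod_mul_distrib]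
  simp only [lhs]
  rw [key]
  refine Finset.prod_eq_zero (Finset.mem_univ i0) ?_
  simp [bR, h0]

lemma sum_sgnR_eval {N : ℕ} (p : MvPolynomial (Fin N) ℝ) (hdeg : p.totalDegree < N) :
    ∑ X : Fin N → Bool, sgnR X * MvPolynomial.eval (fun i => bR (X i)) p = 0 := by
  have heval : ∀ X : Fin N → Bool,
      MvPolynomial.eval (fun i => bR (X i)) p
        = ∑ d ∈ p.support, MvPolynomial.coeff d p * ∏ i, bR (X i) ^ d i := fun X =>
    MvPolynomial.eval_eq' _ _
  simp only [heval, Finset.mul_sum]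
  rw [Finset.sum_comm]
  refine Finset.sum_eq_zero fun d hd => ?_
  obtain ⟨i0, hi0⟩ : ∃ i0, d i0 = 0 := by
    by_contra h
    push_neg at h
    have h1 : ∀ i : Fin N, 1 ≤ d i := fun i => Nat.one_le_iff_ne_zero.mpr (h i)
    have : N ≤ ∑ i : Fin N, d i := by
      calc N = ∑ _i : Fin N, 1 := by simp
        _ ≤ ∑ i : Fin N, d i := Finset.sum_le_sum fun i _ => h1 i
    have hsum : ∑ i : Fin N, d i = d.sum fun _ e => e := by
      rw [Finsupp.sum]
      exact (Finset.sum_subset (Finset.subset_univ _) (fun x _ hx =>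
        Finsupp.notMem_support_iff.mp hx)).symm
    have := le_trans this (hsum ▸ MvPolynomial.le_totalDegree hd)
    omega
  have : ∑ X : Fin N → Bool, sgnR X * (MvPolynomial.coeff d p * ∏ i, bR (X i) ^ d i)
      = MvPolynomial.coeff d p * ∑ X : Fin N → Bool, sgnR X * ∏ i, bR (X i) ^ d i := by
    rw [Finset.mul_sum]; congr 1; ext X; ring
  rw [this, sum_sgnR_monomial d i0 hi0, mul_zero]

lemma parity_lower_bound {N : ℕ} (p : MvPolynomial (Fin N) ℝ)
    (h : ∀ X : Fin N → Bool,
      |MvPolynomial.eval (fun i => bR (X i)) p - parityR X| ≤ 1 / 3) :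
    N ≤ p.totalDegree := by
  by_contra hlt
  push_neg at hlt
  have hN : 0 < N := by omega
  have hS1 := sum_sgnR_eval p hlt
  have hS2 : ∑ X : Fin N → Bool, sgnR X * parityR X = -((2:ℝ) ^ N / 2) := by
    have h1 : ∀ X : Fin N → Bool, sgnR X * parityR X = (sgnR X - 1) / 2 := by
      intro X
      rw [parityR_eq]
      have := sgnR_sq X
      field_simp
      ring_nf
      nlinarith [sgnR_sq X]
    simp only [h1]
    rw [← Finset.sum_div, Finset.sum_sub_distrib, sum_sgnR hN]
    simp [Finset.card_univ]
    ring
  have hsum : ∑ X : Fin N → Bool, sgnR X *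
      (MvPolynomial.eval (fun i => bR (X i)) p - parityR X) = (2:ℝ) ^ N / 2 := by
    have : ∀ X : Fin N → Bool, sgnR X *
        (MvPolynomial.eval (fun i => bR (X i)) p - parityR X)
        = sgnR X * MvPolynomial.eval (fun i => bR (X i)) p - sgnR X * parityR X := by
      intro X; ring
    simp only [this]
    rw [Finset.sum_sub_distrib, hS1, hS2]
    ring
  have habs : |∑ X : Fin N → Bool, sgnR X *
      (MvPolynomial.eval (fun i => bR (X i)) p - parityR X)| ≤ (2:ℝ) ^ N * (1/3) := by
    calc |∑ X : Fin N → Bool, sgnR X *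
        (MvPolynomial.eval (fun i => bR (X i)) p - parityR X)|
        ≤ ∑ X : Fin N → Bool, |sgnR X *
          (MvPolynomial.eval (fun i => bR (X i)) p - parityR X)| :=
          Finset.abs_sum_le_sum_abs _ _
      _ ≤ ∑ _X : Fin N → Bool, (1/3 : ℝ) := by
          refine Finset.sum_le_sum fun X _ => ?_
          rw [abs_mul]
          have h1 : |sgnR X| = 1 := by
            unfold sgnR
            rw [abs_pow, abs_neg, abs_one, one_pow]
          rw [h1, one_mul]
          exact h X
      _ = (2:ℝ) ^ N * (1/3) := by
          simp [Finset.card_univ]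
  rw [hsum] at habs
  have hpos : (0:ℝ) < 2 ^ N := by positivity
  rw [abs_of_pos (by positivity)] at habs
  nlinarith

/-- Any real polynomial approximating PARITY on `{0,1}^N` to within `1/3` has
degree at least `N`; hence the approximate degree of PARITY equals `N`. -/
theorem approx_degree_parity (N : ℕ) :
    (∀ p : MvPolynomial (Fin N) ℝ,
      (∀ X : Fin N → Bool,
        |MvPolynomial.eval (fun i => bR (X i)) p - parityR X| ≤ 1 / 3) →
      N ≤ p.totalDegree) ∧
    (∃ p : MvPolynomial (Fin N) ℝ, p.totalDegree = N ∧
      ∀ X : Fin N → Bool,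
        |MvPolynomial.eval (fun i => bR (X i)) p - parityR X| ≤ 1 / 3) := by
  refine ⟨fun p h => parity_lower_bound p h, ?_⟩
  set q : MvPolynomial (Fin N) ℝ :=
    MvPolynomial.C (1/2) * (1 - ∏ i : Fin N, (1 - MvPolynomial.C 2 * MvPolynomial.X i)) with hq
  have heval : ∀ X : Fin N → Bool,
      MvPolynomial.eval (fun i => bR (X i)) q = parityR X := by
    intro X
    have hfac : ∀ i : Fin N,
        MvPolynomial.eval (fun i => bR (X i)) (1 - MvPolynomial.C 2 * MvPolynomial.X i)
          = (if X i then (-1:ℝ) else 1) := by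
      intro i
      simp only [map_sub, map_mul, map_one, MvPolynomial.eval_C, MvPolynomial.eval_X]
      by_cases h : X i = true <;> simp [h, bR] <;> norm_num
    have hstep : MvPolynomial.eval (fun i => bR (X i)) q
        = (1/2 : ℝ) * (1 - ∏ i, (if X i then (-1:ℝ) else 1)) := by
      rw [hq, map_mul, MvPolynomial.eval_C, map_sub, map_one, map_prod]
      rw [Finset.prod_congr rfl fun i _ => hfac i]
    rw [hstep, ← sgnR_eq_prod, parityR_eq]
    ring
  have h1 : ∀ i : Fin N,
      (1 - MvPolynomial.C 2 * MvPolynomial.X i : MvPolynomial (Fin N) ℝ).totalDegree ≤ 1 := by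
    intro i
    rw [sub_eq_add_neg]
    refine le_trans (MvPolynomial.totalDegree_add _ _)
      (max_le (by simp [MvPolynomial.totalDegree_one]) ?_)
    rw [MvPolynomial.totalDegree_neg]
    refine le_trans (MvPolynomial.totalDegree_mul _ _) ?_
    simp [MvPolynomial.totalDegree_C, MvPolynomial.totalDegree_X]
  have h2 : (∏ i : Fin N,
      (1 - MvPolynomial.C 2 * MvPolynomial.X i) : MvPolynomial (Fin N) ℝ).totalDegree ≤ N := by
    refine le_trans (MvPolynomial.totalDegree_finset_prod _ _) ?_
    calc ∑ i : Fin N,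
        (1 - MvPolynomial.C 2 * MvPolynomial.X i : MvPolynomial (Fin N) ℝ).totalDegree
        ≤ ∑ _i : Fin N, 1 := Finset.sum_le_sum fun i _ => h1 i
      _ = N := by simp
  have h3 : (1 - ∏ i : Fin N,
      (1 - MvPolynomial.C 2 * MvPolynomial.X i) : MvPolynomial (Fin N) ℝ).totalDegree ≤ N := by
    rw [sub_eq_add_neg]
    refine le_trans (MvPolynomial.totalDegree_add _ _)
      (max_le (by simp [MvPolynomial.totalDegree_one]) ?_)
    rw [MvPolynomial.totalDegree_neg]; exact h2
  have hdegle : q.totalDegree ≤ N := by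
    rw [hq]
    refine le_trans (MvPolynomial.totalDegree_mul _ _) ?_
    simpa [MvPolynomial.totalDegree_C] using h3
  have happrox : ∀ X : Fin N → Bool,
      |MvPolynomial.eval (fun i => bR (X i)) q - parityR X| ≤ 1 / 3 := by
    intro X
    rw [heval X]
    norm_num
  exact ⟨q, le_antisymm hdegle (parity_lower_bound q happrox), happrox⟩
end

section
/- Let q : ℝ → ℝ be a polynomial with q(0) ≤ 1/3, q(N) ≤ 1/3 (N even), and q(k) ≥ 2/3 for all odd integers k in [0,N] and q(k) ≤ 1/3 for all even integers k in [0,N]. Then q has degree at least N. -/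
/-- Univariate core of the Minsky–Papert PARITY lower bound: if `N` is even and
`q` satisfies `q(k) ≥ 2/3` on odd integers `k ∈ [0,N]` and `q(k) ≤ 1/3` on even
integers `k ∈ [0,N]` (in particular `q(0), q(N) ≤ 1/3`), then `deg q ≥ N`. -/
theorem parity_univariate_lower_bound (N : ℕ) (hN : Even N) (q : Polynomial ℝ)
    (hodd : ∀ k : ℕ, k ≤ N → Odd k → (2 : ℝ) / 3 ≤ q.eval (k : ℝ))
    (heven : ∀ k : ℕ, k ≤ N → Even k → q.eval (k : ℝ) ≤ 1 / 3) :
    N ≤ q.natDegree := by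
  set p : Polynomial ℝ := q - Polynomial.C (1/2) with hp
  have hpe : ∀ x : ℝ, p.eval x = q.eval x - 1/2 := by intro x; simp [hp]
  have hp0 : p ≠ 0 := by
    intro h
    have h0 : p.eval 0 = 0 := by rw [h]; simp
    have := heven 0 (Nat.zero_le N) (Even.zero)
    rw [hpe] at h0
    push_cast at this
    linarith
  have hdeg : p.natDegree ≤ q.natDegree := by
    calc p.natDegree ≤ max q.natDegree (Polynomial.C (1/2 : ℝ)).natDegree :=
          Polynomial.natDegree_sub_le q _
      _ = q.natDegree := by simp
  have hcont : Continuous fun x : ℝ => p.eval x := p.continuous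
  have key : ∀ k : ℕ, k < N → ∃ r ∈ Set.Ioo (k : ℝ) (k + 1), p.eval r = 0 := by
    intro k hk
    have hk1 : k + 1 ≤ N := hk
    rcases Nat.even_or_odd k with he | ho
    · have h1 : p.eval (k : ℝ) < 0 := by
        have := heven k hk.le he
        rw [hpe]; linarith
      have h2 : 0 < p.eval ((k : ℝ) + 1) := by
        have := hodd (k + 1) hk1 (Even.add_one he)
        push_cast at this
        rw [hpe]; linarith
      have hsub := intermediate_value_Ioo (le_of_lt (by linarith : (k : ℝ) < k + 1))
        hcont.continuousOn
      have : (0 : ℝ) ∈ Set.Ioo (p.eval (k : ℝ)) (p.eval ((k : ℝ) + 1)) := ⟨h1, h2⟩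
      obtain ⟨r, hr, hr0⟩ := hsub this
      exact ⟨r, hr, hr0⟩
    · have h1 : 0 < p.eval (k : ℝ) := by
        have := hodd k hk.le ho
        rw [hpe]; linarith
      have h2 : p.eval ((k : ℝ) + 1) < 0 := by
        have := heven (k + 1) hk1 (Odd.add_one ho)
        push_cast at this
        rw [hpe]; linarith
      have hsub := intermediate_value_Ioo' (le_of_lt (by linarith : (k : ℝ) < k + 1))
        hcont.continuousOn
      have : (0 : ℝ) ∈ Set.Ioo (p.eval ((k : ℝ) + 1)) (p.eval (k : ℝ)) := ⟨h2, h1⟩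
      obtain ⟨r, hr, hr0⟩ := hsub this
      exact ⟨r, hr, hr0⟩
  choose! r hr hr0 using key
  have hcard : (Finset.range N).card ≤ p.roots.toFinset.card := by
    apply Finset.card_le_card_of_injOn r
    · intro k hk
      have hk' := Finset.mem_range.mp hk
      rw [Finset.mem_coe, Multiset.mem_toFinset, Polynomial.mem_roots hp0]
      exact hr0 k hk'
    · intro j hj k hk hjk
      by_contra hne
      rcases lt_or_gt_of_ne hne with h | h
      · have h1 := (hr j (Finset.mem_range.mp hj)).2
        have h2 := (hr k (Finset.mem_range.mp hk)).1
        have : (j : ℝ) + 1 ≤ (k : ℝ) := by exact_mod_cast Nat.succ_le_of_lt h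
        rw [hjk] at h1; linarith
      · have h1 := (hr k (Finset.mem_range.mp hk)).2
        have h2 := (hr j (Finset.mem_range.mp hj)).1
        have : (k : ℝ) + 1 ≤ (j : ℝ) := by exact_mod_cast Nat.succ_le_of_lt h
        rw [hjk] at h2; linarith
  calc N = (Finset.range N).card := (Finset.card_range N).symm
    _ ≤ p.roots.toFinset.card := hcard
    _ ≤ Multiset.card p.roots := p.roots.toFinset_card_le
    _ ≤ p.natDegree := p.card_roots'
    _ ≤ q.natDegree := hdeg
end

section
/- For every Boolean function f : {0,1}^N → {0,1}, the certificate complexity satisfies C(f) ≤ bs(f)^2. -/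
def flipB {N : ℕ} (X : Fin N → Bool) (B : Finset (Fin N)) : Fin N → Bool :=
  fun i => if i ∈ B then !(X i) else X i

lemma flipB_flipB {N : ℕ} (X : Fin N → Bool) {B C : Finset (Fin N)} (h : C ⊆ B) :
    flipB (flipB X B) (B \ C) = flipB X C := by
  funext i
  simp only [flipB, Finset.mem_sdiff]
  by_cases hC : i ∈ C
  · have hB := h hC
    simp [hB, hC]
  · by_cases hB : i ∈ B <;> simp [hB, hC]

/-- Nisan: `C(f) ≤ bs(f)²`.  Stated as: if `b` is an upper bound on the block
sensitivity of `f` (every family of pairwise disjoint sensitive blocks has size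
at most `b`), then every input `X` has a certificate of size at most `b²`. -/
theorem certificate_le_block_sensitivity_sq (N : ℕ)
    (f : (Fin N → Bool) → Bool) (b : ℕ)
    (hbs : ∀ (X : Fin N → Bool) (t : ℕ) (B : Fin t → Finset (Fin N)),
      (∀ i j : Fin t, i ≠ j → Disjoint (B i) (B j)) →
      (∀ i : Fin t, f (flipB X (B i)) ≠ f X) → t ≤ b) :
    ∀ X : Fin N → Bool, ∃ S : Finset (Fin N),
      S.card ≤ b ^ 2 ∧
      ∀ Y : Fin N → Bool, (∀ i ∈ S, Y i = X i) → f Y = f X := by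
  classical
  -- every sensitive block contains a minimal sensitive block
  have exists_min : ∀ (X : Fin N → Bool) (Bset : Finset (Fin N)), f (flipB X Bset) ≠ f X →
      ∃ C, C ⊆ Bset ∧ f (flipB X C) ≠ f X ∧ ∀ D ⊂ C, f (flipB X D) = f X := by
    intro X Bset hS
    have hne : (Bset.powerset.filter (fun C => f (flipB X C) ≠ f X)).Nonempty :=
      ⟨Bset, by simp [hS]⟩
    obtain ⟨m, hm, hmin⟩ : ∃ m ∈ Bset.powerset.filter (fun C => f (flipB X C) ≠ f X),
        ∀ x ∈ Bset.powerset.filter (fun C => f (flipB X C) ≠ f X), ¬x < m :=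
      (Finset.exists_minimal hne).imp fun m h => ⟨h.1, fun x hx => h.not_lt hx⟩
    simp only [Finset.mem_filter, Finset.mem_powerset] at hm
    refine ⟨m, hm.1, hm.2, ?_⟩
    intro D hD
    by_contra hDs
    refine hmin D ?_ hD
    simp only [Finset.mem_filter, Finset.mem_powerset]
    exact ⟨hD.subset.trans hm.1, hDs⟩
  -- every minimal sensitive block has size ≤ b
  have card_le : ∀ (X : Fin N → Bool) (C : Finset (Fin N)),
      f (flipB X C) ≠ f X → (∀ D ⊂ C, f (flipB X D) = f X) → C.card ≤ b := by
    intro X C hS hmin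
    set X' := flipB X C with hX'
    have key : ∀ a ∈ C, f (flipB X' {a}) ≠ f X' := by
      intro a ha
      have h1 : C \ C.erase a = {a} := Finset.sdiff_erase_self ha
      have h2 : flipB X' (C \ C.erase a) = flipB X (C.erase a) :=
        flipB_flipB X (Finset.erase_subset _ _)
      rw [← h1, h2, hmin (C.erase a) (Finset.erase_ssubset ha)]
      exact fun h => hS h.symm
    let e := C.equivFin
    refine hbs X' C.card (fun i => {(e.symm i : Fin N)}) ?_ ?_
    · intro i j hij
      rw [Finset.disjoint_singleton]
      exact fun h => hij (e.symm.injective (Subtype.ext h))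
    · intro i
      exact key _ (e.symm i).2
  intro X
  -- maximal family of disjoint sensitive blocks of size ≤ b
  let P : ℕ → Prop := fun t => ∃ B : Fin t → Finset (Fin N),
    (∀ i j, i ≠ j → Disjoint (B i) (B j)) ∧
    ∀ i, f (flipB X (B i)) ≠ f X ∧ (B i).card ≤ b
  have hP0 : P 0 := ⟨fun i => i.elim0, fun i => i.elim0, fun i => i.elim0⟩
  have hPle : ∀ t, P t → t ≤ b := by
    rintro t ⟨B, hd, hs⟩
    exact hbs X t B hd (fun i => (hs i).1)
  set t := Nat.findGreatest P b with ht
  have hPt : P t := Nat.findGreatest_spec (Nat.zero_le b) hP0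
  have hmax : ¬ P (t + 1) := by
    intro h
    exact Nat.findGreatest_is_greatest (Nat.lt_succ_self t) (hPle _ h) h
  obtain ⟨B, hdisj, hsens⟩ := hPt
  refine ⟨Finset.univ.biUnion B, ?_, ?_⟩
  · calc (Finset.univ.biUnion B).card ≤ ∑ i, (B i).card := Finset.card_biUnion_le
      _ ≤ ∑ _i : Fin t, b := Finset.sum_le_sum (fun i _ => (hsens i).2)
      _ = t * b := by simp [Finset.sum_const, mul_comm]
      _ ≤ b * b := Nat.mul_le_mul_right b (hPle t ⟨B, hdisj, hsens⟩)
      _ = b ^ 2 := (sq b).symm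
  · intro Y hY
    by_contra hne
    set D := Finset.univ.filter (fun i => Y i ≠ X i) with hDdef
    have hD : flipB X D = Y := by
      funext i
      have hmem : i ∈ D ↔ Y i ≠ X i := by simp [hDdef]
      by_cases h : Y i = X i
      · have : i ∉ D := fun hi => (hmem.mp hi) h
        simp [flipB, this, h]
      · have h2 : (!X i) = Y i := by
          cases hx : X i <;> cases hy : Y i <;>
            first | rfl | exact absurd (hy.trans hx.symm) h
        simp only [flipB]
        rw [if_pos (hmem.mpr h)]
        exact h2
    have hDs : f (flipB X D) ≠ f X := by rw [hD]; exact hne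
    obtain ⟨D', hD'sub, hD'sens, hD'min⟩ := exists_min X D hDs
    have hD'card := card_le X D' hD'sens hD'min
    have hDdisj : ∀ k : Fin t, Disjoint D' (B k) := by
      intro k
      rw [Finset.disjoint_left]
      intro x hx hxB
      have hxD : x ∈ D := hD'sub hx
      have hYx : Y x ≠ X x := by simpa [hDdef] using hxD
      exact hYx (hY x (Finset.mem_biUnion.mpr ⟨k, Finset.mem_univ k, hxB⟩))
    apply hmax
    refine ⟨fun i => if h : (i : ℕ) < t then B ⟨i, h⟩ else D', ?_, ?_⟩
    · intro i j hij
      by_cases hi : (i : ℕ) < t <;> by_cases hj : (j : ℕ) < t <;> simp only [hi, hj,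
        dif_pos, dif_neg, not_false_iff]
      · refine hdisj ⟨i, hi⟩ ⟨j, hj⟩ (fun h => hij ?_)
        have h' := congrArg Fin.val h
        exact Fin.ext h'
      · exact (hDdisj ⟨i, hi⟩).symm
      · exact hDdisj ⟨j, hj⟩
      · exfalso
        apply hij
        apply Fin.ext
        have h1 := i.isLt
        have h2 := j.isLt
        omega
    · intro i
      by_cases hi : (i : ℕ) < t
      · simpa [hi] using hsens ⟨i, hi⟩
      · simpa [hi] using ⟨hD'sens, hD'card⟩
end

section
/- For every Boolean function f : {0,1}^N → {0,1}, the deterministic decision tree complexity satisfies D(f) ≤ C^{(1)}(f) · bs(f), where C^{(1)}(f) is the maximum certificate complexity over 1-inputs. -/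
/-- Deterministic decision trees querying bits of an input in `{0,1}^N`. -/
inductive DTree (N : ℕ) where
  | leaf : Bool → DTree N
  | node : Fin N → DTree N → DTree N → DTree N

/-- Output of a decision tree on an input. -/
def DTree.evalT {N : ℕ} : DTree N → (Fin N → Bool) → Bool
  | leaf b, _ => b
  | node i t₀ t₁, X => if X i then (t₁.evalT X) else (t₀.evalT X)

/-- Depth (worst-case number of queries) of a decision tree. -/
def DTree.depth {N : ℕ} : DTree N → ℕ
  | leaf _ => 0
  | node _ t₀ t₁ => 1 + max t₀.depth t₁.depth

namespace DTreeAux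

variable {N : ℕ}

/-- Overwrite `σ` with the values of `X` on the positions in `L`. -/
def ov (σ X : Fin N → Bool) (L : List (Fin N)) : Fin N → Bool :=
  fun j => if j ∈ L then X j else σ j

/-- Query all positions in `L`, recording answers into the running assignment,
then continue with `k`. -/
def queryAll (σ : Fin N → Bool) : List (Fin N) → ((Fin N → Bool) → DTree N) → DTree N
  | [], k => k σ
  | i :: L, k =>
      .node i (queryAll (Function.update σ i false) L k)
              (queryAll (Function.update σ i true) L k)

lemma ov_cons (σ X : Fin N → Bool) (i : Fin N) (L : List (Fin N)) :
    ov (Function.update σ i (X i)) X L = ov σ X (i :: L) := by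
  funext j
  by_cases hj : j ∈ L
  · simp [ov, hj]
  · by_cases hij : j = i
    · subst hij; simp [ov, hj]
    · simp [ov, hj, hij, Function.update_of_ne hij]

lemma queryAll_eval (X : Fin N → Bool) :
    ∀ (L : List (Fin N)) (σ : Fin N → Bool) (k : (Fin N → Bool) → DTree N),
      (queryAll σ L k).evalT X = (k (ov σ X L)).evalT X := by
  intro L
  induction L with
  | nil =>
    intro σ k
    have : ov σ X [] = σ := funext fun j => by simp [ov]
    simp [queryAll, this]
  | cons i L ih =>
    intro σ k
    cases hX : X i with
    | false =>
        show (if X i = true then _ else (queryAll (Function.update σ i false) L k).evalT X) = _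
        rw [if_neg (by simp [hX]), ih, ← hX, ov_cons]
    | true =>
        show (if X i = true then (queryAll (Function.update σ i true) L k).evalT X else _) = _
        rw [if_pos hX, ih, ← hX, ov_cons]

lemma queryAll_depth (d : ℕ) :
    ∀ (L : List (Fin N)) (σ : Fin N → Bool) (k : (Fin N → Bool) → DTree N),
      (∀ τ, (k τ).depth ≤ d) → (queryAll σ L k).depth ≤ L.length + d := by
  intro L
  induction L with
  | nil => intro σ k hk; simpa [queryAll] using hk σ
  | cons i L ih =>
    intro σ k hk
    have h0 := ih (Function.update σ i false) k hk
    have h1 := ih (Function.update σ i true) k hk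
    simp only [queryAll, DTree.depth, List.length_cons]
    omega

open Classical in
/-- The tree built by the certificate-querying algorithm, with `m` rounds of
fuel, current knowledge `σ` on the queried set `Q`. -/
noncomputable def buildT (f : (Fin N → Bool) → Bool) (c₁ : ℕ)
    (hc : ∀ X : Fin N → Bool, f X = true → ∃ S : Finset (Fin N),
      S.card ≤ c₁ ∧ ∀ Y : Fin N → Bool, (∀ i ∈ S, Y i = X i) → f Y = true) :
    ℕ → (Fin N → Bool) → Finset (Fin N) → DTree N
  | 0, σ, _ => .leaf (f σ)
  | (m+1), σ, Q =>
      if h : ∃ Y, (∀ i ∈ Q, Y i = σ i) ∧ f Y = true then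
        let Y := Classical.choose h
        let S := Classical.choose (hc Y (Classical.choose_spec h).2)
        queryAll σ S.toList (fun τ =>
          if ∀ i ∈ S, τ i = Y i then .leaf true
          else buildT f c₁ hc m τ (Q ∪ S))
      else .leaf false


lemma blocks_contra (f : (Fin N → Bool) → Bool) (b : ℕ)
    (hbs : ∀ (X : Fin N → Bool) (t : ℕ) (B : Fin t → Finset (Fin N)),
      (∀ i j : Fin t, i ≠ j → Disjoint (B i) (B j)) →
      (∀ i : Fin t, f (flipB X (B i)) ≠ f X) → t ≤ b)
    (z : Fin N → Bool) (hz : f z = false)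
    (L : List (Finset (Fin N) × (Fin N → Bool)))
    (hlen : b < L.length)
    (hcert : ∀ p ∈ L, ∀ Z : Fin N → Bool, (∀ i ∈ p.1, Z i = p.2 i) → f Z = true)
    (hpair : L.Pairwise (fun p q => ∀ j ∈ q.1, p.2 j = z j)) : False := by
  classical
  have hidx : ∀ i : Fin (b+1), (i : ℕ) < L.length := fun i => Nat.lt_of_lt_of_le i.isLt hlen
  set E : Fin (b+1) → Finset (Fin N) × (Fin N → Bool) := fun i => L.get ⟨i, hidx i⟩ with hE
  set B : Fin (b+1) → Finset (Fin N) :=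
    fun i => (E i).1.filter (fun j => z j ≠ (E i).2 j) with hB
  have hmemB : ∀ (i : Fin (b+1)) (x : Fin N), x ∈ B i ↔ x ∈ (E i).1 ∧ z x ≠ (E i).2 x := by
    intro i x
    rw [hB]
    exact Finset.mem_filter
  have hflip : ∀ i : Fin (b+1), f (flipB z (B i)) = true := by
    intro i
    refine hcert (E i) (by rw [hE]; exact L.get_mem _) (flipB z (B i)) fun j hj => ?_
    show (if j ∈ B i then !(z j) else z j) = (E i).2 j
    by_cases hm : j ∈ B i
    · have hne := ((hmemB i j).mp hm).2
      rw [if_pos hm]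
      cases hzj : z j <;> cases hpj : (E i).2 j
      · rw [hzj, hpj] at hne; exact absurd rfl hne
      · rfl
      · rfl
      · rw [hzj, hpj] at hne; exact absurd rfl hne
    · have heq : z j = (E i).2 j := by
        by_contra hne
        exact hm ((hmemB i j).mpr ⟨hj, hne⟩)
      rw [if_neg hm]; exact heq
  have hdisj : ∀ i j : Fin (b+1), i ≠ j → Disjoint (B i) (B j) := by
    have key : ∀ i j : Fin (b+1), (i : ℕ) < (j : ℕ) → Disjoint (B i) (B j) := by
      intro i j hij
      rw [Finset.disjoint_left]
      intro x hxi hxj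
      have h1 := (hmemB i x).mp hxi
      have h2 := (hmemB j x).mp hxj
      have hR := List.pairwise_iff_get.mp hpair ⟨i, hidx i⟩ ⟨j, hidx j⟩ (Fin.mk_lt_mk.mpr hij)
      have := hR x (by rw [hE] at h2; exact h2.1)
      rw [hE] at h1
      exact h1.2 this.symm
    intro i j hij
    have hne : (i : ℕ) ≠ (j : ℕ) := fun h => hij (Fin.ext h)
    rcases lt_or_gt_of_ne hne with h | h
    · exact key i j h
    · exact (key j i h).symm
  have hfin := hbs z (b+1) B hdisj (fun i => by rw [hflip i, hz]; simp)
  omega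

lemma buildT_eval (f : (Fin N → Bool) → Bool) (c₁ b : ℕ)
    (hc : ∀ X : Fin N → Bool, f X = true → ∃ S : Finset (Fin N),
      S.card ≤ c₁ ∧ ∀ Y : Fin N → Bool, (∀ i ∈ S, Y i = X i) → f Y = true)
    (hbs : ∀ (X : Fin N → Bool) (t : ℕ) (B : Fin t → Finset (Fin N)),
      (∀ i j : Fin t, i ≠ j → Disjoint (B i) (B j)) →
      (∀ i : Fin t, f (flipB X (B i)) ≠ f X) → t ≤ b) :
    ∀ (m : ℕ) (σ : Fin N → Bool) (Q : Finset (Fin N))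
      (H : List (Finset (Fin N) × (Fin N → Bool))) (X : Fin N → Bool),
      (∀ i ∈ Q, X i = σ i) →
      b ≤ m + H.length →
      (∀ p ∈ H, p.1 ⊆ Q ∧ ∀ Z : Fin N → Bool, (∀ i ∈ p.1, Z i = p.2 i) → f Z = true) →
      H.Pairwise (fun p q => ∀ j ∈ q.1, p.2 j = σ j) →
      (buildT f c₁ hc m σ Q).evalT X = f X := by
  classical
  intro m
  induction m with
  | zero =>
    intro σ Q H X hXσ hlen hH hpair
    have key : ∀ z w : Fin N → Bool, (∀ i ∈ Q, z i = σ i) → (∀ i ∈ Q, w i = σ i) →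
        f z = false → f w = true → False := by
      intro z w hzσ hwσ hz hw
      obtain ⟨Sw, -, hcert⟩ := hc w hw
      refine blocks_contra f b hbs z hz ((Sw, w) :: H) (by simp only [List.length_cons]; omega) ?_ ?_
      · rintro p hp Z hZ
        rcases List.mem_cons.mp hp with h | h
        · subst h; exact hcert Z hZ
        · exact (hH p h).2 Z hZ
      · refine List.Pairwise.cons ?_ ?_
        · intro q hq j hj
          have hjQ : j ∈ Q := (hH q hq).1 hj
          show w j = z j
          rw [hwσ j hjQ, hzσ j hjQ]
        · refine List.Pairwise.imp_of_mem ?_ hpair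
          intro p q hp hq h j hj
          have hjQ : j ∈ Q := (hH q hq).1 hj
          rw [h j hj, ← hzσ j hjQ]
    show (DTree.leaf (f σ)).evalT X = f X
    show f σ = f X
    cases hσ : f σ <;> cases hX : f X
    · rfl
    · exact (key σ X (fun _ _ => rfl) hXσ hσ hX).elim
    · exact (key X σ hXσ (fun _ _ => rfl) hX hσ).elim
    · rfl
  | succ m ih =>
    intro σ Q H X hXσ hlen hH hpair
    rw [buildT]
    by_cases h : ∃ Y, (∀ i ∈ Q, Y i = σ i) ∧ f Y = true
    · rw [dif_pos h]
      set Y := Classical.choose h with hY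
      set S := Classical.choose (hc Y (Classical.choose_spec h).2) with hS
      have hYσ : ∀ i ∈ Q, Y i = σ i := (Classical.choose_spec h).1
      have hScert : ∀ Z : Fin N → Bool, (∀ i ∈ S, Z i = Y i) → f Z = true :=
        (Classical.choose_spec (hc Y (Classical.choose_spec h).2)).2
      rw [queryAll_eval]
      set τ := ov σ X S.toList with hτ
      have hτS : ∀ i ∈ S, τ i = X i := by
        intro i hi; simp [hτ, ov, Finset.mem_toList.mpr hi]
      have hτQ : ∀ i ∈ Q, τ i = X i := by
        intro i hi
        by_cases hiS : i ∈ S.toList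
        · simp [hτ, ov, hiS]
        · simp [hτ, ov, hiS, (hXσ i hi).symm]
      by_cases ht : ∀ i ∈ S, τ i = Y i
      · rw [if_pos ht]
        have hfX : f X = true := by
          refine hScert X fun i hi => ?_
          rw [← hτS i hi, ht i hi]
        show true = f X
        rw [hfX]
      · rw [if_neg ht]
        refine ih τ (Q ∪ S) ((S, Y) :: H) X ?_ ?_ ?_ ?_
        · intro i hi
          rcases Finset.mem_union.mp hi with h' | h'
          · exact (hτQ i h').symm
          · exact (hτS i h').symm
        · simp only [List.length_cons]; omega
        · rintro p hp
          rcases List.mem_cons.mp hp with h' | h'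
          · subst h'
            exact ⟨Finset.subset_union_right, hScert⟩
          · exact ⟨(hH p h').1.trans Finset.subset_union_left, (hH p h').2⟩
        · refine List.Pairwise.cons ?_ ?_
          · intro q hq j hj
            have hjQ : j ∈ Q := (hH q hq).1 hj
            show Y j = τ j
            rw [hYσ j hjQ, ← hXσ j hjQ, ← hτQ j hjQ]
          · refine List.Pairwise.imp_of_mem ?_ hpair
            intro p q hp hq h' j hj
            have hjQ : j ∈ Q := (hH q hq).1 hj
            rw [h' j hj, ← hXσ j hjQ, ← hτQ j hjQ]
    · rw [dif_neg h]
      show false = f X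
      cases hfX : f X
      · rfl
      · exact absurd ⟨X, hXσ, hfX⟩ h

lemma buildT_depth (f : (Fin N → Bool) → Bool) (c₁ : ℕ)
    (hc : ∀ X : Fin N → Bool, f X = true → ∃ S : Finset (Fin N),
      S.card ≤ c₁ ∧ ∀ Y : Fin N → Bool, (∀ i ∈ S, Y i = X i) → f Y = true) :
    ∀ (m : ℕ) (σ : Fin N → Bool) (Q : Finset (Fin N)),
      (buildT f c₁ hc m σ Q).depth ≤ m * c₁ := by
  classical
  intro m
  induction m with
  | zero => intro σ Q; simp [buildT, DTree.depth]
  | succ m ih =>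
    intro σ Q
    rw [buildT]
    by_cases h : ∃ Y, (∀ i ∈ Q, Y i = σ i) ∧ f Y = true
    · rw [dif_pos h]
      set Y := Classical.choose h with hY
      set S := Classical.choose (hc Y (Classical.choose_spec h).2) with hS
      have hcard : S.card ≤ c₁ :=
        (Classical.choose_spec (hc Y (Classical.choose_spec h).2)).1
      have hcont : ∀ τ : Fin N → Bool,
          (if ∀ i ∈ S, τ i = Y i then DTree.leaf true
            else buildT f c₁ hc m τ (Q ∪ S)).depth ≤ m * c₁ := by
        intro τ
        by_cases ht : ∀ i ∈ S, τ i = Y i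
        · rw [if_pos ht]; exact Nat.zero_le _
        · rw [if_neg ht]; exact ih τ (Q ∪ S)
      have hqd := queryAll_depth (m * c₁) S.toList σ
        (fun τ => if ∀ i ∈ S, τ i = Y i then DTree.leaf true
          else buildT f c₁ hc m τ (Q ∪ S)) hcont
      refine le_trans hqd ?_
      have hmul : (m + 1) * c₁ = c₁ + m * c₁ := by ring
      rw [hmul]
      exact Nat.add_le_add_right
        (le_trans (le_of_eq (Finset.length_toList S)) hcard) _
    · rw [dif_neg h]
      simp [DTree.depth]

end DTreeAux

/-- `D(f) ≤ C⁽¹⁾(f) · bs(f)`: if every 1-input of `f` has a 1-certificate of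
size at most `c₁`, and `b` bounds the block sensitivity of `f`, then there is a
decision tree of depth at most `c₁ · b` computing `f`. -/
theorem D_le_cert1_mul_bs (N : ℕ) (f : (Fin N → Bool) → Bool) (c₁ b : ℕ)
    (hc : ∀ X : Fin N → Bool, f X = true → ∃ S : Finset (Fin N),
      S.card ≤ c₁ ∧ ∀ Y : Fin N → Bool, (∀ i ∈ S, Y i = X i) → f Y = true)
    (hbs : ∀ (X : Fin N → Bool) (t : ℕ) (B : Fin t → Finset (Fin N)),
      (∀ i j : Fin t, i ≠ j → Disjoint (B i) (B j)) →
      (∀ i : Fin t, f (flipB X (B i)) ≠ f X) → t ≤ b) :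
    ∃ T : DTree N, T.depth ≤ c₁ * b ∧ ∀ X : Fin N → Bool, T.evalT X = f X := by
  classical
  refine ⟨DTreeAux.buildT f c₁ hc b (fun _ => false) ∅, ?_, ?_⟩
  · have := DTreeAux.buildT_depth f c₁ hc b (fun _ => false) ∅
    simpa [Nat.mul_comm] using this
  · intro X
    exact DTreeAux.buildT_eval f c₁ b hc hbs b (fun _ => false) ∅ [] X
      (by simp) (by simp) (by simp) List.Pairwise.nil
end

section
/- For every Boolean function f : {0,1}^N → {0,1}, D(f) ≤ bs(f)^3. -/
/-! ### Auxiliary machinery -/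

/-- Query all variables in `L`, recording answers into `σ`, then continue with `K`. -/
def queryTree {N : ℕ} (K : (Fin N → Bool) → DTree N) : List (Fin N) → (Fin N → Bool) → DTree N
  | [], σ => K σ
  | i :: L, σ => .node i (queryTree K L (Function.update σ i false))
      (queryTree K L (Function.update σ i true))

lemma queryTree_depth {N : ℕ} (K : (Fin N → Bool) → DTree N) (d : ℕ)
    (hK : ∀ τ, (K τ).depth ≤ d) :
    ∀ (L : List (Fin N)) (σ : Fin N → Bool), (queryTree K L σ).depth ≤ L.length + d := by
  intro L
  induction L with
  | nil => intro σ; simpa [queryTree] using hK σ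
  | cons i L ih =>
    intro σ
    have h0 := ih (Function.update σ i false)
    have h1 := ih (Function.update σ i true)
    simp only [queryTree, DTree.depth, List.length_cons]
    omega

lemma queryTree_eval {N : ℕ} (K : (Fin N → Bool) → DTree N) (X : Fin N → Bool) :
    ∀ (L : List (Fin N)) (σ : Fin N → Bool), ∃ σ' : Fin N → Bool,
      (queryTree K L σ).evalT X = (K σ').evalT X ∧ (∀ i ∈ L, σ' i = X i) ∧
        (∀ i ∉ L, σ' i = σ i) := by
  intro L
  induction L with
  | nil =>
    intro σ
    exact ⟨σ, rfl, by simp, fun _ _ => rfl⟩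
  | cons i L ih =>
    intro σ
    obtain ⟨σ', h1, h2, h3⟩ := ih (Function.update σ i (X i))
    refine ⟨σ', ?_, ?_, ?_⟩
    · rw [← h1]
      simp only [queryTree, DTree.evalT]
      cases hXi : X i <;> simp [hXi]
    · intro j hj
      rcases List.mem_cons.mp hj with hj | hj
      · subst hj
        by_cases hjL : j ∈ L
        · exact h2 j hjL
        · rw [h3 j hjL, Function.update_self]
      · exact h2 j hj
    · intro j hj
      have hj1 : j ≠ i := fun h => hj (h ▸ (List.mem_cons_self : i ∈ i :: L))
      have hj2 : j ∉ L := fun h => hj (List.mem_cons_of_mem _ h)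
      rw [h3 j hj2, Function.update_of_ne hj1]

/-- A minimal subset with a given property. -/
lemma exists_min_subset {α : Type*} [DecidableEq α] (P : Finset α → Prop) (D : Finset α)
    (hD : P D) : ∃ D' ⊆ D, P D' ∧ ∀ E ⊆ D', E ≠ D' → ¬ P E := by
  induction D using Finset.strongInductionOn with
  | _ D ih =>
    by_cases h : ∃ E ⊂ D, P E
    · obtain ⟨E, hE, hPE⟩ := h
      obtain ⟨D', hsub, h1, h2⟩ := ih E hE hPE
      exact ⟨D', hsub.trans hE.subset, h1, h2⟩
    · refine ⟨D, subset_rfl, hD, fun E hsub hne hPE => h ⟨E, ?_, hPE⟩⟩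
      exact lt_of_le_of_ne hsub hne

lemma snoc_disjoint {N k : ℕ} {B : Fin k → Finset (Fin N)} {D : Finset (Fin N)}
    (h1 : ∀ i j, i ≠ j → Disjoint (B i) (B j)) (h2 : ∀ i, Disjoint D (B i)) :
    ∀ i j, i ≠ j → Disjoint (Fin.snoc (α := fun _ => Finset (Fin N)) B D i)
      (Fin.snoc (α := fun _ => Finset (Fin N)) B D j) := by
  intro i j hij
  induction i using Fin.lastCases with
  | last =>
    induction j using Fin.lastCases with
    | last => exact absurd rfl hij
    | cast j =>
      rw [Fin.snoc_last, Fin.snoc_castSucc]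
      exact h2 j
  | cast i =>
    induction j using Fin.lastCases with
    | last =>
      rw [Fin.snoc_last, Fin.snoc_castSucc]
      exact (h2 i).symm
    | cast j =>
      rw [Fin.snoc_castSucc, Fin.snoc_castSucc]
      exact h1 i j (fun h => hij (by rw [h]))

section Main

variable {N : ℕ} {f : (Fin N → Bool) → Bool} {b : ℕ}

/-- A minimal sensitive block has size at most `b`. -/
lemma min_block_card
    (hbs : ∀ (X : Fin N → Bool) (t : ℕ) (B : Fin t → Finset (Fin N)),
      (∀ i j : Fin t, i ≠ j → Disjoint (B i) (B j)) →
      (∀ i : Fin t, f (flipB X (B i)) ≠ f X) → t ≤ b)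
    (Y : Fin N → Bool) (D : Finset (Fin N))
    (hsens : f (flipB Y D) ≠ f Y)
    (hmin : ∀ E ⊆ D, E ≠ D → f (flipB Y E) = f Y) : D.card ≤ b := by
  have key : ∀ a ∈ D, flipB (flipB Y D) {a} = flipB Y (D.erase a) := by
    intro a ha
    funext i
    by_cases hia : i = a
    · subst hia
      simp [flipB, ha]
    · by_cases hiD : i ∈ D <;> simp [flipB, hia, hiD]
  apply hbs (flipB Y D) D.card (fun i => {(D.equivFin.symm i : Fin N)})
  · intro i j hij
    simp only [Finset.disjoint_singleton_left, Finset.mem_singleton]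
    intro h
    exact hij (D.equivFin.symm.injective (Subtype.ext h))
  · intro i
    have ha : (D.equivFin.symm i : Fin N) ∈ D := (D.equivFin.symm i).2
    rw [key _ ha]
    have herase : f (flipB Y (D.erase (D.equivFin.symm i : Fin N))) = f Y := by
      apply hmin _ (D.erase_subset _)
      intro h
      have hne := D.notMem_erase (D.equivFin.symm i : Fin N)
      rw [h] at hne
      exact hne ha
    rw [herase]
    exact fun h => hsens h.symm

/-- Certificate lemma: around any point `Y`, relative to fixed coordinates `S`,
there is a certificate of size at most `b²`. -/
lemma cert
    (hbs : ∀ (X : Fin N → Bool) (t : ℕ) (B : Fin t → Finset (Fin N)),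
      (∀ i j : Fin t, i ≠ j → Disjoint (B i) (B j)) →
      (∀ i : Fin t, f (flipB X (B i)) ≠ f X) → t ≤ b)
    (Y : Fin N → Bool) (S : Finset (Fin N)) :
    ∃ C : Finset (Fin N), Disjoint C S ∧ C.card ≤ b * b ∧
      ∀ W, (∀ i ∈ S, W i = Y i) → (∀ i ∈ C, W i = Y i) → f W = f Y := by
  suffices h : ∀ (m t : ℕ) (B : Fin t → Finset (Fin N)),
      b + 1 ≤ t + m →
      (∀ i j, i ≠ j → Disjoint (B i) (B j)) →
      (∀ i, Disjoint (B i) S) →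
      (∀ i, f (flipB Y (B i)) ≠ f Y) →
      (∀ i, (B i).card ≤ b) →
      ∃ C : Finset (Fin N), Disjoint C S ∧ C.card ≤ b * b ∧
        ∀ W, (∀ i ∈ S, W i = Y i) → (∀ i ∈ C, W i = Y i) → f W = f Y by
    exact h (b + 1) 0 (fun i => i.elim0) (by omega) (fun i => i.elim0) (fun i => i.elim0)
      (fun i => i.elim0) (fun i => i.elim0)
  intro m
  induction m with
  | zero =>
    intro t B hcount hd _ hsens _
    have := hbs Y t B hd hsens
    omega
  | succ m ih =>
    intro t B hcount hd hdS hsens hcard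
    by_cases hD : ∃ D : Finset (Fin N), Disjoint D S ∧ (∀ i, Disjoint D (B i)) ∧
        f (flipB Y D) ≠ f Y
    · obtain ⟨D, hDS, hDB, hDsens⟩ := hD
      obtain ⟨D', hD'sub, hD'sens, hD'min⟩ :=
        exists_min_subset (fun E => f (flipB Y E) ≠ f Y) D hDsens
      have hcardD' : D'.card ≤ b := by
        apply min_block_card hbs Y D' hD'sens
        intro E hE hne
        have := hD'min E hE hne
        simpa using this
      refine ih (t + 1) (Fin.snoc B D') (by omega) ?_ ?_ ?_ ?_
      · apply snoc_disjoint hd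
        intro i
        exact (hDB i).mono_left hD'sub
      · intro i
        induction i using Fin.lastCases with
        | last => simpa using hDS.mono_left hD'sub
        | cast i => simpa using hdS i
      · intro i
        induction i using Fin.lastCases with
        | last => simpa using hD'sens
        | cast i => simpa using hsens i
      · intro i
        induction i using Fin.lastCases with
        | last => simpa using hcardD'
        | cast i => simpa using hcard i
    · push_neg at hD
      have htb : t ≤ b := hbs Y t B hd hsens
      refine ⟨Finset.univ.biUnion B, ?_, ?_, ?_⟩
      · rw [Finset.disjoint_biUnion_left]
        intro i _
        exact hdS i
      · calc (Finset.univ.biUnion B).card ≤ ∑ i, (B i).card := Finset.card_biUnion_le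
          _ ≤ ∑ _i : Fin t, b := Finset.sum_le_sum (fun i _ => hcard i)
          _ = t * b := by simp [Finset.sum_const, Finset.card_univ]
          _ ≤ b * b := Nat.mul_le_mul_right b htb
      · intro W hWS hWC
        set D : Finset (Fin N) := Finset.univ.filter (fun i => ¬ W i = Y i) with hDdef
        have hmemD : ∀ i, i ∈ D ↔ ¬ W i = Y i := by
          intro i; simp [hDdef]
        have hWD : flipB Y D = W := by
          funext i
          show (if i ∈ D then !(Y i) else Y i) = W i
          by_cases h : W i = Y i
          · rw [if_neg (fun hh => ((hmemD i).mp hh) h), h]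
          · rw [if_pos ((hmemD i).mpr h)]
            revert h
            cases W i <;> cases Y i <;> simp
        have h1 : Disjoint D S := by
          rw [Finset.disjoint_left]
          intro a haD haS
          exact (hmemD a).mp haD (hWS a haS)
        have h2 : ∀ i, Disjoint D (B i) := by
          intro i
          rw [Finset.disjoint_left]
          intro a haD haB
          exact (hmemD a).mp haD (hWC a (Finset.mem_biUnion.mpr ⟨i, Finset.mem_univ i, haB⟩))
        have := hD D h1 h2
        rw [hWD] at this
        exact this

/-- Main recursion: if we already have `k` guaranteed disjoint sensitive blocks at any
consistent 0-input, we can finish with a tree of depth `m * b²` where `b ≤ k + m`. -/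
lemma main_rec
    (hbs : ∀ (X : Fin N → Bool) (t : ℕ) (B : Fin t → Finset (Fin N)),
      (∀ i j : Fin t, i ≠ j → Disjoint (B i) (B j)) →
      (∀ i : Fin t, f (flipB X (B i)) ≠ f X) → t ≤ b) :
    ∀ (m : ℕ) (S : Finset (Fin N)) (σ : Fin N → Bool) (k : ℕ),
      b ≤ k + m →
      (∀ Z : Fin N → Bool, (∀ i ∈ S, Z i = σ i) → f Z = false →
        ∃ B : Fin k → Finset (Fin N),
          (∀ i j, i ≠ j → Disjoint (B i) (B j)) ∧ (∀ i, B i ⊆ S) ∧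
          (∀ i, f (flipB Z (B i)) = true)) →
      ∃ T : DTree N, T.depth ≤ m * (b * b) ∧
        ∀ X, (∀ i ∈ S, X i = σ i) → T.evalT X = f X := by
  -- key step: if both a 1-input and a 0-input consistent with (S, σ) exist, then k + 1 ≤ b
  have nonconst_bound : ∀ (S : Finset (Fin N)) (σ : Fin N → Bool) (k : ℕ),
      (∀ Z : Fin N → Bool, (∀ i ∈ S, Z i = σ i) → f Z = false →
        ∃ B : Fin k → Finset (Fin N),
          (∀ i j, i ≠ j → Disjoint (B i) (B j)) ∧ (∀ i, B i ⊆ S) ∧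
          (∀ i, f (flipB Z (B i)) = true)) →
      ∀ Y, (∀ i ∈ S, Y i = σ i) → f Y = true →
      ∀ Z, (∀ i ∈ S, Z i = σ i) → f Z = false → k + 1 ≤ b := by
    intro S σ k hInv Y hYa hY1 Z hZa hZ0
    obtain ⟨B, hd, hsub, hsens⟩ := hInv Z hZa hZ0
    set D : Finset (Fin N) := Finset.univ.filter (fun i => ¬ Z i = Y i) with hDdef
    have hmemD : ∀ i, i ∈ D ↔ ¬ Z i = Y i := by intro i; simp [hDdef]
    have hZD : flipB Z D = Y := by
      funext i
      show (if i ∈ D then !(Z i) else Z i) = Y i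
      by_cases h : Z i = Y i
      · rw [if_neg (fun hh => ((hmemD i).mp hh) h), h]
      · rw [if_pos ((hmemD i).mpr h)]
        revert h
        cases Z i <;> cases Y i <;> simp
    have hDB : ∀ i, Disjoint D (B i) := by
      intro i
      rw [Finset.disjoint_left]
      intro a haD haB
      have haS : a ∈ S := hsub i haB
      exact (hmemD a).mp haD ((hZa a haS).trans (hYa a haS).symm)
    apply hbs Z (k + 1) (Fin.snoc B D)
    · exact snoc_disjoint hd hDB
    · intro i
      induction i using Fin.lastCases with
      | last => simp [Fin.snoc_last, hZD, hY1, hZ0]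
      | cast i => simp [Fin.snoc_castSucc, hsens i, hZ0]
  intro m
  induction m with
  | zero =>
    intro S σ k hbk hInv
    by_cases hY : ∃ Y, (∀ i ∈ S, Y i = σ i) ∧ f Y = true
    · obtain ⟨Y, hYa, hY1⟩ := hY
      refine ⟨.leaf true, by simp [DTree.depth], fun X hX => ?_⟩
      show true = f X
      by_contra hne
      have hX0 : f X = false := by
        cases h : f X
        · rfl
        · exact absurd h.symm hne
      have := nonconst_bound S σ k hInv Y hYa hY1 X hX hX0
      omega
    · refine ⟨.leaf false, by simp [DTree.depth], fun X hX => ?_⟩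
      show false = f X
      cases h : f X
      · rfl
      · exact absurd ⟨X, hX, h⟩ hY
  | succ m ih =>
    intro S σ k hbk hInv
    by_cases hY : ∃ Y, (∀ i ∈ S, Y i = σ i) ∧ f Y = true
    swap
    · refine ⟨.leaf false, by simp [DTree.depth], fun X hX => ?_⟩
      show false = f X
      cases h : f X
      · rfl
      · exact absurd ⟨X, hX, h⟩ hY
    by_cases hZ : ∃ Z, (∀ i ∈ S, Z i = σ i) ∧ f Z = false
    swap
    · refine ⟨.leaf true, by simp [DTree.depth], fun X hX => ?_⟩
      show true = f X
      cases h : f X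
      · exact absurd ⟨X, hX, h⟩ hZ
      · rfl
    obtain ⟨Y, hYa, hY1⟩ := hY
    obtain ⟨C, hCS, hCcard, hCcert⟩ := cert hbs Y S
    -- the invariant transfers to the extended set of fixed coordinates
    have hInv' : ∀ τ : Fin N → Bool, (∀ i ∈ S, τ i = σ i) →
        ∀ Z : Fin N → Bool, (∀ i ∈ S ∪ C, Z i = τ i) → f Z = false →
        ∃ B : Fin (k + 1) → Finset (Fin N),
          (∀ i j, i ≠ j → Disjoint (B i) (B j)) ∧ (∀ i, B i ⊆ S ∪ C) ∧
          (∀ i, f (flipB Z (B i)) = true) := by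
      intro τ hτ Z hZa hZ0
      have hZS : ∀ i ∈ S, Z i = σ i := fun i hi =>
        (hZa i (Finset.mem_union_left _ hi)).trans (hτ i hi)
      obtain ⟨B, hd, hsub, hsens⟩ := hInv Z hZS hZ0
      set D : Finset (Fin N) := C.filter (fun i => ¬ Z i = Y i) with hDdef
      have hmemD : ∀ i, i ∈ D ↔ (i ∈ C ∧ ¬ Z i = Y i) := by intro i; simp [hDdef]
      have hflip : f (flipB Z D) = true := by
        rw [← hY1]
        apply hCcert
        · intro i hi
          have hiD : i ∉ D := fun h => (Finset.disjoint_right.mp hCS hi) ((hmemD i).mp h).1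
          show (if i ∈ D then !(Z i) else Z i) = Y i
          rw [if_neg hiD]
          exact (hZS i hi).trans (hYa i hi).symm
        · intro i hi
          show (if i ∈ D then !(Z i) else Z i) = Y i
          by_cases h : Z i = Y i
          · rw [if_neg (fun hh => ((hmemD i).mp hh).2 h)]
            exact h
          · rw [if_pos ((hmemD i).mpr ⟨hi, h⟩)]
            revert h
            cases Z i <;> cases Y i <;> simp
      refine ⟨Fin.snoc B D, ?_, ?_, ?_⟩
      · apply snoc_disjoint hd
        intro i
        rw [Finset.disjoint_left]
        intro a haD haB
        exact (Finset.disjoint_left.mp hCS ((hmemD a).mp haD).1) (hsub i haB)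
      · intro i
        induction i using Fin.lastCases with
        | last =>
          simp only [Fin.snoc_last]
          exact (Finset.filter_subset _ _).trans Finset.subset_union_right
        | cast i =>
          simp only [Fin.snoc_castSucc]
          exact (hsub i).trans Finset.subset_union_left
      · intro i
        induction i using Fin.lastCases with
        | last => simpa using hflip
        | cast i => simpa using hsens i
    -- continuation trees
    have hK : ∀ τ : Fin N → Bool, ∃ T : DTree N, T.depth ≤ m * (b * b) ∧
        ((∀ i ∈ S, τ i = σ i) → ∀ X, (∀ i ∈ S ∪ C, X i = τ i) → T.evalT X = f X) := by
      intro τ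
      by_cases hτ : ∀ i ∈ S, τ i = σ i
      · obtain ⟨T, hT1, hT2⟩ := ih (S ∪ C) τ (k + 1) (by omega) (hInv' τ hτ)
        exact ⟨T, hT1, fun _ => hT2⟩
      · exact ⟨.leaf true, by simp [DTree.depth], fun h => absurd h hτ⟩
    choose K hK1 hK2 using hK
    refine ⟨queryTree K C.toList σ, ?_, ?_⟩
    · have := queryTree_depth K (m * (b * b)) hK1 C.toList σ
      have hlen : C.toList.length = C.card := Finset.length_toList C
      have hmul : (m + 1) * (b * b) = m * (b * b) + b * b := by ring
      omega
    · intro X hX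
      obtain ⟨σ', h1, h2, h3⟩ := queryTree_eval K X C.toList σ
      have hσ'S : ∀ i ∈ S, σ' i = σ i := by
        intro i hi
        have hiL : i ∉ C.toList := by
          rw [Finset.mem_toList]
          exact Finset.disjoint_right.mp hCS hi
        exact h3 i hiL
      rw [h1]
      apply hK2 σ' hσ'S X
      intro i hi
      rcases Finset.mem_union.mp hi with hi | hi
      · rw [hσ'S i hi]
        exact hX i hi
      · exact (h2 i (Finset.mem_toList.mpr hi)).symm

end Main

/-- `D(f) ≤ bs(f)³`: if `b` bounds the block sensitivity of `f`, then there is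
a decision tree of depth at most `b³` computing `f`. -/
theorem D_le_bs_cubed (N : ℕ) (f : (Fin N → Bool) → Bool) (b : ℕ)
    (hbs : ∀ (X : Fin N → Bool) (t : ℕ) (B : Fin t → Finset (Fin N)),
      (∀ i j : Fin t, i ≠ j → Disjoint (B i) (B j)) →
      (∀ i : Fin t, f (flipB X (B i)) ≠ f X) → t ≤ b) :
    ∃ T : DTree N, T.depth ≤ b ^ 3 ∧ ∀ X : Fin N → Bool, T.evalT X = f X := by
  obtain ⟨T, hT1, hT2⟩ := main_rec hbs b (∅ : Finset (Fin N)) (fun _ => false) 0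
    (by omega)
    (fun Z _ _ => ⟨fun i => i.elim0, fun i => i.elim0, fun i => i.elim0, fun i => i.elim0⟩)
  refine ⟨T, ?_, fun X => hT2 X (by simp)⟩
  have : b ^ 3 = b * (b * b) := by ring
  omega
end

section
/- If p : ℝ^N → ℝ is a polynomial with p(X) ∈ [0,1] for all X ∈ {0,1}^N and |p(X) − f(X)| ≤ 1/3 for all Boolean X, where f is a Boolean function with block sensitivity b realized at input Z with f(Z) = 0 via disjoint blocks B_1,...,B_b, then the polynomial q : ℝ^b → ℝ defined by q(Y) = p(Z with block B_i flipped according to y_i) satisfies: q(Y) ∈ [0,1] on {0,1}^b, q(0,...,0) ≤ 1/3, and q(e_i) ≥ 2/3 for each standard basis vector e_i; moreover deg(q) ≤ deg(p). -/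
open Classical in
/-- The substitution `Y ↦ Z(Y)` of the block-sensitivity argument: coordinate
`j` in block `B i` becomes `y_i` (resp. `1 - y_i`) if `Z j = 0` (resp. `1`),
and coordinates outside all blocks stay fixed at `Z j`. -/
noncomputable def blockEmbed {N b : ℕ} (B : Fin b → Finset (Fin N))
    (Z : Fin N → Bool) (Y : Fin b → ℝ) : Fin N → ℝ :=
  fun j => if h : ∃ i : Fin b, j ∈ B i then
      (if Z j then 1 - Y h.choose else Y h.choose)
    else (if Z j then 1 else 0)

open Classical in
/-- The Boolean version of `blockEmbed`. -/
noncomputable def blockEmbedBool {N b : ℕ} (B : Fin b → Finset (Fin N))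
    (Z : Fin N → Bool) (Y : Fin b → Bool) : Fin N → Bool :=
  fun j => if h : ∃ i : Fin b, j ∈ B i then
      (if Y h.choose then !(Z j) else Z j)
    else Z j

open Classical in
lemma blockEmbed_bR {N b : ℕ} (B : Fin b → Finset (Fin N))
    (Z : Fin N → Bool) (Y : Fin b → Bool) :
    blockEmbed B Z (fun i => bR (Y i)) = fun j => bR (blockEmbedBool B Z Y j) := by
  funext j
  simp only [blockEmbed, blockEmbedBool]
  split
  · rename_i h
    cases hz : Z j <;> cases hy : Y h.choose <;> simp [bR]
  · rfl

open Classical in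
lemma degree_aux {N b : ℕ} (g : Fin N → MvPolynomial (Fin b) ℝ)
    (hg : ∀ j, (g j).totalDegree ≤ 1) (p : MvPolynomial (Fin N) ℝ) :
    (MvPolynomial.aeval g p).totalDegree ≤ p.totalDegree := by
  rw [MvPolynomial.aeval_def, MvPolynomial.eval₂_eq]
  apply MvPolynomial.totalDegree_finsetSum_le
  intro d hd
  calc (algebraMap ℝ (MvPolynomial (Fin b) ℝ) (p.coeff d) *
        ∏ i ∈ d.support, g i ^ d i).totalDegree
      ≤ (algebraMap ℝ (MvPolynomial (Fin b) ℝ) (p.coeff d)).totalDegree +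
        (∏ i ∈ d.support, g i ^ d i).totalDegree := MvPolynomial.totalDegree_mul _ _
    _ ≤ 0 + ∑ i ∈ d.support, (g i ^ d i).totalDegree := by
        gcongr
        · exact le_of_eq (MvPolynomial.totalDegree_C _)
        · exact MvPolynomial.totalDegree_finset_prod _ _
    _ ≤ ∑ i ∈ d.support, d i * 1 := by
        rw [zero_add]
        apply Finset.sum_le_sum
        intro i _
        exact (MvPolynomial.totalDegree_pow _ _).trans (by gcongr; exact hg i)
    _ = d.sum fun _ e => e := by simp [Finsupp.sum]
    _ ≤ p.totalDegree := MvPolynomial.le_totalDegree hd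

open Classical in
/-- Restriction step of the block-sensitivity lower bound: if `p ∈ [0,1]` on
Boolean inputs approximates `f` to within `1/3`, `f(Z) = 0`, and
`B₁,…,B_b` are pairwise disjoint blocks to which `f` is sensitive on `Z`, then
`q(Y) = p(Z(Y))` takes values in `[0,1]` on `{0,1}^b`, `q(0) ≤ 1/3`,
`q(eᵢ) ≥ 2/3`, and `q` is a polynomial of degree at most `deg p`. -/
theorem block_restriction (N b : ℕ) (f : (Fin N → Bool) → Bool)
    (p : MvPolynomial (Fin N) ℝ) (Z : Fin N → Bool)
    (B : Fin b → Finset (Fin N))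
    (hdisj : ∀ i j : Fin b, i ≠ j → Disjoint (B i) (B j))
    (hsens : ∀ i : Fin b, f (flipB Z (B i)) ≠ f Z)
    (hfZ : f Z = false)
    (hrange : ∀ X : Fin N → Bool,
      MvPolynomial.eval (fun i => bR (X i)) p ∈ Set.Icc (0 : ℝ) 1)
    (happrox : ∀ X : Fin N → Bool,
      |MvPolynomial.eval (fun i => bR (X i)) p - bR (f X)| ≤ 1 / 3) :
    (∀ Y : Fin b → Bool,
      MvPolynomial.eval (blockEmbed B Z (fun i => bR (Y i))) p
        ∈ Set.Icc (0 : ℝ) 1) ∧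
    MvPolynomial.eval (blockEmbed B Z (fun _ => (0 : ℝ))) p ≤ 1 / 3 ∧
    (∀ i : Fin b, (2 : ℝ) / 3 ≤
      MvPolynomial.eval (blockEmbed B Z (fun j => if j = i then (1 : ℝ) else 0)) p) ∧
    (∃ q : MvPolynomial (Fin b) ℝ, q.totalDegree ≤ p.totalDegree ∧
      ∀ Y : Fin b → ℝ,
        MvPolynomial.eval Y q = MvPolynomial.eval (blockEmbed B Z Y) p) := by
  refine ⟨?_, ?_, ?_, ?_⟩
  · intro Y
    rw [blockEmbed_bR]
    exact hrange _
  · have h0 : (fun _ : Fin b => (0 : ℝ)) = fun i => bR ((fun _ : Fin b => false) i) := by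
      funext i; simp [bR]
    rw [h0, blockEmbed_bR]
    have hZ : blockEmbedBool B Z (fun _ => false) = Z := by
      funext j
      simp only [blockEmbedBool]
      split <;> rfl
    rw [hZ]
    have := happrox Z
    rw [hfZ] at this
    simp only [bR, if_false, Bool.false_eq_true, sub_zero] at this
    simp only [bR]
    linarith [abs_le.mp this]
  · intro i
    have h1 : (fun j : Fin b => if j = i then (1 : ℝ) else 0)
        = fun j => bR ((fun j : Fin b => decide (j = i)) j) := by
      funext j; by_cases h : j = i <;> simp [bR, h]
    rw [h1, blockEmbed_bR]
    have hflip : blockEmbedBool B Z (fun j : Fin b => decide (j = i)) = flipB Z (B i) := by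
      funext j
      simp only [blockEmbedBool, flipB]
      split
      · rename_i h
        have hcs := h.choose_spec
        by_cases hji : j ∈ B i
        · have : h.choose = i := by
            by_contra hne
            exact (Finset.disjoint_left.mp (hdisj _ _ hne) hcs) hji
          simp [this, hji]
        · have : h.choose ≠ i := fun he => hji (he ▸ hcs)
          simp [this, hji]
      · rename_i h
        have : j ∉ B i := fun hj => h ⟨i, hj⟩
        simp [this]
    rw [hflip]
    have hft : f (flipB Z (B i)) = true := by
      have := hsens i
      rw [hfZ] at this
      simpa using this
    have := happrox (flipB Z (B i))
    rw [hft] at this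
    simp only [bR, if_true] at this
    simp only [bR]
    linarith [abs_le.mp this]
  · set g : Fin N → MvPolynomial (Fin b) ℝ := fun j =>
      if h : ∃ i : Fin b, j ∈ B i then
        (if Z j then 1 - MvPolynomial.X h.choose else MvPolynomial.X h.choose)
      else (if Z j then 1 else 0) with hg_def
    have hg : ∀ j, (g j).totalDegree ≤ 1 := by
      intro j
      simp only [hg_def]
      split
      · split
        · refine (MvPolynomial.totalDegree_sub _ _).trans ?_
          simp [MvPolynomial.totalDegree_X, MvPolynomial.totalDegree_one]
        · simp [MvPolynomial.totalDegree_X]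
      · split <;> simp [MvPolynomial.totalDegree_one]
    refine ⟨MvPolynomial.aeval g p, degree_aux g hg p, ?_⟩
    intro Y
    have : MvPolynomial.eval Y (MvPolynomial.aeval g p)
        = MvPolynomial.eval (fun j => MvPolynomial.eval Y (g j)) p := by
      rw [MvPolynomial.aeval_def, MvPolynomial.eval_eval₂]
      have hid : (MvPolynomial.eval Y).comp (algebraMap ℝ (MvPolynomial (Fin b) ℝ))
          = RingHom.id ℝ := by
        ext r
        simp [MvPolynomial.algebraMap_eq]
      rw [hid, MvPolynomial.eval₂_id]
    rw [this]
    have heq : (fun j => MvPolynomial.eval Y (g j)) = blockEmbed B Z Y := by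
      funext j
      simp only [hg_def, blockEmbed]
      split
      · split <;> simp
      · split <;> simp
    rw [heq]
end
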